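/- arXiv:2008.05037 — 4 statements merged into one kernel-verified Lean document; each statement's English description precedes it below -/
import Mathlib

section
/- Let {Λ_ω}_{ω∈Ω} be an integral K-operator Bessel family for B(H) with frame operator S. Then {Λ_ω}_{ω∈Ω} is an integral K-operator frame for B(H) if and only if K = S^{1/2} L for some L ∈ B(H). -/
/-!
By the frame-operator identity, `∫ ‖Λ_ω x‖² dμ = ⟪S x, x⟫ = ‖S^{1/2} x‖²`, so the lower frame
bound says exactly that `‖K* x‖ ≤ c ‖S^{1/2} x‖` for some `c`. By Douglas' theorem this holds iff
`K = S^{1/2} L` for some bounded `L`. For Douglas' theorem itself, the bound makes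
`S^{1/2} x ↦ K* x` a well-defined bounded map on the range of `S^{1/2}`; it extends to the
closure of the range and, via the orthogonal projection onto that closure, to all of `H`.
-/

open MeasureTheory ContinuousLinearMap

theorem exists_pos_mul_sq_le_iff_exists_le_mul {α : Type*} {f g : α → ℝ}
    (hf : ∀ a, 0 ≤ f a) (hg : ∀ a, 0 ≤ g a) :
    (∃ A : ℝ, 0 < A ∧ ∀ a, A * f a ^ 2 ≤ g a ^ 2) ↔ ∃ c : ℝ, ∀ a, f a ≤ c * g a := by
  constructor
  · rintro ⟨A, hA, h⟩
    refine ⟨(√A)⁻¹, fun a => ?_⟩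
    have hsqrtA : 0 < √A := Real.sqrt_pos.mpr hA
    have : √A * f a ≤ g a := by
      apply pow_le_pow_iff_left₀ (mul_nonneg hsqrtA.le (hf a)) (hg a) two_ne_zero |>.mp
      rw [mul_pow, Real.sq_sqrt hA.le]
      exact h a
    rw [inv_mul_eq_div, le_div_iff₀ hsqrtA]
    linarith
  · rintro ⟨c, h⟩
    refine ⟨(c ^ 2 + 1)⁻¹, by positivity, fun a => ?_⟩
    have hsq : f a ^ 2 ≤ c ^ 2 * g a ^ 2 := by
      rw [← mul_pow]; exact pow_le_pow_left₀ (hf a) (h a) 2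
    rw [inv_mul_le_iff₀ (by positivity)]
    nlinarith [sq_nonneg (g a)]

section Douglas

variable {𝕜 E F G : Type*} [RCLike 𝕜]

theorem ContinuousLinearMap.exists_eq_comp_of_norm_le [NormedAddCommGroup E] [NormedSpace 𝕜 E]
    [NormedAddCommGroup F] [InnerProductSpace 𝕜 F] [CompleteSpace F]
    [NormedAddCommGroup G] [NormedSpace 𝕜 G] [CompleteSpace G]
    {T : E →L[𝕜] F} {A : E →L[𝕜] G} {c : ℝ} (h : ∀ x, ‖A x‖ ≤ c * ‖T x‖) :
    ∃ L : F →L[𝕜] G, A = L ∘L T := by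
  set R := LinearMap.range (T : E →ₗ[𝕜] F)
  set M := R.topologicalClosure
  have : CompleteSpace M := R.isClosed_topologicalClosure.completeSpace_coe
  have hTM : ∀ x, T x ∈ M := fun x => R.le_topologicalClosure (LinearMap.mem_range_self _ x)
  set e : E →ₗ[𝕜] M := (T : E →ₗ[𝕜] F).codRestrict M hTM
  have he : DenseRange e := by
    refine Subtype.dense_iff.mpr ?_
    rw [← Set.range_comp]
    exact (R.topologicalClosure_coe).subset
  refine ⟨(A : E →ₗ[𝕜] G).extendOfNorm e ∘L M.orthogonalProjectionOnto, ?_⟩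
  ext x
  have hproj : M.orthogonalProjectionOnto (T x) = e x :=
    M.orthogonalProjectionOnto_mem_subspace_eq_self (e x)
  simp [hproj, LinearMap.extendOfNorm_eq he ⟨c, h⟩]

variable [NormedAddCommGroup E] [InnerProductSpace 𝕜 E] [CompleteSpace E]
  [NormedAddCommGroup F] [InnerProductSpace 𝕜 F] [CompleteSpace F]
  [NormedAddCommGroup G] [InnerProductSpace 𝕜 G] [CompleteSpace G]

theorem ContinuousLinearMap.exists_eq_comp_iff_exists_norm_adjoint_le
    (K : E →L[𝕜] G) (T : F →L[𝕜] G) :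
    (∃ L : E →L[𝕜] F, K = T ∘L L) ↔ ∃ c : ℝ, ∀ x, ‖adjoint K x‖ ≤ c * ‖adjoint T x‖ := by
  constructor
  · rintro ⟨L, rfl⟩
    refine ⟨‖adjoint L‖, fun x => ?_⟩
    rw [adjoint_comp]
    exact (adjoint L).le_opNorm _
  · rintro ⟨c, h⟩
    obtain ⟨L, hL⟩ := exists_eq_comp_of_norm_le h
    refine ⟨adjoint L, ?_⟩
    rw [← adjoint_adjoint K, hL, adjoint_comp, adjoint_adjoint]

end Douglas

theorem stmt_2_general {H : Type*} [NormedAddCommGroup H] [InnerProductSpace ℂ H] [CompleteSpace H]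
    {Ω : Type*} [MeasurableSpace Ω] (μ : Measure Ω)
    (Λ : Ω → H →L[ℂ] H) (K S sqrtS : H →L[ℂ] H)
    (hS : ∀ x : H, (inner ℂ (S x) x : ℂ).re = ∫ ω, ‖Λ ω x‖ ^ 2 ∂μ)
    (hsqrt_pos : sqrtS.IsPositive) (hsqrt : sqrtS ∘L sqrtS = S) :
    (∃ A : ℝ, 0 < A ∧ ∀ x : H, A * ‖adjoint K x‖ ^ 2 ≤ ∫ ω, ‖Λ ω x‖ ^ 2 ∂μ) ↔
      (∃ L : H →L[ℂ] H, K = sqrtS ∘L L) := by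
  have hself : adjoint sqrtS = sqrtS := hsqrt_pos.isSelfAdjoint.adjoint_eq
  have hframe : ∀ x, ∫ ω, ‖Λ ω x‖ ^ 2 ∂μ = ‖sqrtS x‖ ^ 2 := fun x => by
    rw [← hS, apply_norm_sq_eq_inner_adjoint_left, hself, hsqrt]
    rfl
  simp_rw [hframe]
  rw [exists_pos_mul_sq_le_iff_exists_le_mul (fun _ => norm_nonneg _) (fun _ => norm_nonneg _),
    exists_eq_comp_iff_exists_norm_adjoint_le, hself]

theorem stmt_2 {H : Type*} [NormedAddCommGroup H] [InnerProductSpace ℂ H] [CompleteSpace H]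
    {Ω : Type*} [MeasurableSpace Ω] (μ : Measure Ω)
    (Λ : Ω → H →L[ℂ] H) (K S sqrtS : H →L[ℂ] H) (B : ℝ) (hB : 0 < B)
    (hBessel : ∀ x : H, ∫ ω, ‖Λ ω x‖ ^ 2 ∂μ ≤ B * ‖x‖ ^ 2)
    (hS : ∀ x : H, (inner ℂ (S x) x : ℂ).re = ∫ ω, ‖Λ ω x‖ ^ 2 ∂μ)
    (hsqrt_pos : sqrtS.IsPositive) (hsqrt : sqrtS ∘L sqrtS = S) :
    (∃ A : ℝ, 0 < A ∧ ∀ x : H, A * ‖adjoint K x‖ ^ 2 ≤ ∫ ω, ‖Λ ω x‖ ^ 2 ∂μ) ↔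
      (∃ L : H →L[ℂ] H, K = sqrtS ∘L L) :=
  stmt_2_general μ Λ K S sqrtS hS hsqrt_pos hsqrt
end

section
/- Let K, L ∈ B(H) and suppose {Λ_ω}_{ω∈Ω} is both an integral K-operator frame (with bounds A, B) and an integral L-operator frame (with bounds C, D) for B(H), and let a, b be nonzero scalars. Then {Λ_ω}_{ω∈Ω} is an integral (aK + bL)-operator frame for B(H) with lower bound AC/(√C|a| + √A|b|)² and upper bound (B+D)/2. -/
open MeasureTheory ContinuousLinearMap

/-!
Both lower frame bounds control the same quantity `I = ∫ ‖Λ_ω x‖²`: `√A ‖K* x‖ ≤ √I` and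
`√C ‖L* x‖ ≤ √I`. Since `(aK + bL)* = ā K* + b̄ L*`, the triangle inequality gives
`√A √C ‖(aK + bL)* x‖ ≤ (√C |a| + √A |b|) √I`, which squares to the lower bound. The upper bound
is the average of the two upper bounds.
-/

theorem Real.sqrt_mul_le_sqrt_of_mul_sq_le {A u I : ℝ} (h : A * u ^ 2 ≤ I) :
    √A * u ≤ √I :=
  calc √A * u ≤ √A * |u| := mul_le_mul_of_nonneg_left (le_abs_self u) (Real.sqrt_nonneg A)
    _ = √(A * u ^ 2) := by rw [Real.sqrt_mul' A (sq_nonneg u), Real.sqrt_sq_eq_abs]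
    _ ≤ √I := Real.sqrt_le_sqrt h

/-- No positivity of `√C * α + √A * β` is needed: if it vanishes, the left side is `0`
since `x / 0 = 0`. -/
theorem Real.mul_div_sq_mul_sq_le_of_le_add {A C α β t u v I : ℝ}
    (hA : 0 ≤ A) (hC : 0 ≤ C) (hα : 0 ≤ α) (hβ : 0 ≤ β) (ht₀ : 0 ≤ t)
    (ht : t ≤ α * u + β * v) (hu : A * u ^ 2 ≤ I) (hv : C * v ^ 2 ≤ I) :
    A * C / (√C * α + √A * β) ^ 2 * t ^ 2 ≤ I := by
  have hI : 0 ≤ I := (by positivity : 0 ≤ A * u ^ 2).trans hu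
  have key : √A * √C * t ≤ (√C * α + √A * β) * √I :=
    calc √A * √C * t ≤ √A * √C * (α * u + β * v) :=
          mul_le_mul_of_nonneg_left ht (by positivity)
      _ = √C * α * (√A * u) + √A * β * (√C * v) := by ring
      _ ≤ √C * α * √I + √A * β * √I := by
          gcongr
          exacts [Real.sqrt_mul_le_sqrt_of_mul_sq_le hu, Real.sqrt_mul_le_sqrt_of_mul_sq_le hv]
      _ = (√C * α + √A * β) * √I := by ring
  rw [div_mul_eq_mul_div]
  refine div_le_of_le_mul₀ (by positivity) hI ?_
  calc A * C * t ^ 2 = (√A * √C * t) ^ 2 := by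
        rw [mul_pow, mul_pow, Real.sq_sqrt hA, Real.sq_sqrt hC]
    _ ≤ ((√C * α + √A * β) * √I) ^ 2 := pow_le_pow_left₀ (by positivity) key 2
    _ = I * (√C * α + √A * β) ^ 2 := by rw [mul_pow, Real.sq_sqrt hI, mul_comm]

theorem ContinuousLinearMap.norm_adjoint_smul_add_smul_apply_le {𝕜 E F : Type*} [RCLike 𝕜]
    [NormedAddCommGroup E] [InnerProductSpace 𝕜 E] [CompleteSpace E]
    [NormedAddCommGroup F] [InnerProductSpace 𝕜 F] [CompleteSpace F]
    (a b : 𝕜) (K L : E →L[𝕜] F) (x : F) :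
    ‖adjoint (a • K + b • L) x‖ ≤ ‖a‖ * ‖adjoint K x‖ + ‖b‖ * ‖adjoint L x‖ := by
  rw [map_add, map_smulₛₗ, map_smulₛₗ, add_apply, smul_apply, smul_apply]
  refine (norm_add_le _ _).trans_eq ?_
  rw [norm_smul, norm_smul, RCLike.norm_conj, RCLike.norm_conj]

theorem stmt_5_general {H : Type*} [NormedAddCommGroup H] [InnerProductSpace ℂ H] [CompleteSpace H]
    {Ω : Type*} [MeasurableSpace Ω] (μ : Measure Ω)
    (Λ : Ω → H →L[ℂ] H) (K L : H →L[ℂ] H) (A B C D : ℝ)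
    (hA : 0 < A) (hC : 0 < C)
    (hKlow : ∀ x : H, A * ‖adjoint K x‖ ^ 2 ≤ ∫ ω, ‖Λ ω x‖ ^ 2 ∂μ)
    (hKupp : ∀ x : H, ∫ ω, ‖Λ ω x‖ ^ 2 ∂μ ≤ B * ‖x‖ ^ 2)
    (hLlow : ∀ x : H, C * ‖adjoint L x‖ ^ 2 ≤ ∫ ω, ‖Λ ω x‖ ^ 2 ∂μ)
    (hLupp : ∀ x : H, ∫ ω, ‖Λ ω x‖ ^ 2 ∂μ ≤ D * ‖x‖ ^ 2)
    (a b : ℂ) :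
    ∀ x : H,
      A * C / (Real.sqrt C * ‖a‖ + Real.sqrt A * ‖b‖) ^ 2 *
          ‖adjoint (a • K + b • L) x‖ ^ 2 ≤ ∫ ω, ‖Λ ω x‖ ^ 2 ∂μ ∧
      ∫ ω, ‖Λ ω x‖ ^ 2 ∂μ ≤ (B + D) / 2 * ‖x‖ ^ 2 := by
  intro x
  refine ⟨?_, by linarith [hKupp x, hLupp x]⟩
  exact Real.mul_div_sq_mul_sq_le_of_le_add hA.le hC.le (norm_nonneg a) (norm_nonneg b)
    (norm_nonneg _) (norm_adjoint_smul_add_smul_apply_le a b K L x) (hKlow x) (hLlow x)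

theorem stmt_5 {H : Type*} [NormedAddCommGroup H] [InnerProductSpace ℂ H] [CompleteSpace H]
    {Ω : Type*} [MeasurableSpace Ω] (μ : Measure Ω)
    (Λ : Ω → H →L[ℂ] H) (K L : H →L[ℂ] H) (A B C D : ℝ)
    (hA : 0 < A) (hB : 0 < B) (hC : 0 < C) (hD : 0 < D)
    (hKlow : ∀ x : H, A * ‖adjoint K x‖ ^ 2 ≤ ∫ ω, ‖Λ ω x‖ ^ 2 ∂μ)
    (hKupp : ∀ x : H, ∫ ω, ‖Λ ω x‖ ^ 2 ∂μ ≤ B * ‖x‖ ^ 2)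
    (hLlow : ∀ x : H, C * ‖adjoint L x‖ ^ 2 ≤ ∫ ω, ‖Λ ω x‖ ^ 2 ∂μ)
    (hLupp : ∀ x : H, ∫ ω, ‖Λ ω x‖ ^ 2 ∂μ ≤ D * ‖x‖ ^ 2)
    (a b : ℂ) (ha : a ≠ 0) (hb : b ≠ 0) :
    ∀ x : H,
      A * C / (Real.sqrt C * ‖a‖ + Real.sqrt A * ‖b‖) ^ 2 *
          ‖adjoint (a • K + b • L) x‖ ^ 2 ≤ ∫ ω, ‖Λ ω x‖ ^ 2 ∂μ ∧
      ∫ ω, ‖Λ ω x‖ ^ 2 ∂μ ≤ (B + D) / 2 * ‖x‖ ^ 2 :=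
  stmt_5_general μ Λ K L A B C D hA hC hKlow hKupp hLlow hLupp a b
end

section
/- Let {Λ_ω}_{ω∈Ω} be an integral K-operator frame for B(H) with bounds A and B, and let Q : H → H be a bounded invertible operator (linear homeomorphism) such that Q^{-1} commutes with K*. Then {Λ_ω Q}_{ω∈Ω} is an integral K-operator frame for B(H) with bounds A‖Q^{-1}‖^{-2} and B‖Q‖². -/
open MeasureTheory ContinuousLinearMap

theorem stmt_7 {H : Type*} [NormedAddCommGroup H] [InnerProductSpace ℂ H] [CompleteSpace H]
    {Ω : Type*} [MeasurableSpace Ω] (μ : Measure Ω)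
    (Λ : Ω → H →L[ℂ] H) (K : H →L[ℂ] H) (A B : ℝ) (hA : 0 < A) (hB : 0 < B)
    (hlow : ∀ x : H, A * ‖adjoint K x‖ ^ 2 ≤ ∫ ω, ‖Λ ω x‖ ^ 2 ∂μ)
    (hupp : ∀ x : H, ∫ ω, ‖Λ ω x‖ ^ 2 ∂μ ≤ B * ‖x‖ ^ 2)
    (Q : H ≃L[ℂ] H)
    (hcomm : (Q.symm : H →L[ℂ] H) ∘L adjoint K = adjoint K ∘L (Q.symm : H →L[ℂ] H)) :
    ∀ x : H,
      A / ‖(Q.symm : H →L[ℂ] H)‖ ^ 2 * ‖adjoint K x‖ ^ 2 ≤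
          ∫ ω, ‖(Λ ω ∘L (Q : H →L[ℂ] H)) x‖ ^ 2 ∂μ ∧
      ∫ ω, ‖(Λ ω ∘L (Q : H →L[ℂ] H)) x‖ ^ 2 ∂μ ≤ B * ‖(Q : H →L[ℂ] H)‖ ^ 2 * ‖x‖ ^ 2 := by
  intro x
  have hcomp : ∀ ω, (Λ ω ∘L (Q : H →L[ℂ] H)) x = Λ ω (Q x) := fun ω => rfl
  constructor
  · -- lower bound
    have hkey : adjoint K x = (Q.symm : H →L[ℂ] H) (adjoint K (Q x)) := by
      have := congrArg (fun T : H →L[ℂ] H => T (Q x)) hcomm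
      simp only [comp_apply] at this
      rw [this]
      simp
    have hnorm : ‖adjoint K x‖ ≤ ‖(Q.symm : H →L[ℂ] H)‖ * ‖adjoint K (Q x)‖ := by
      rw [hkey]; exact le_opNorm _ _
    have h1 : A * ‖adjoint K (Q x)‖ ^ 2 ≤ ∫ ω, ‖Λ ω (Q x)‖ ^ 2 ∂μ := hlow (Q x)
    simp only [hcomp]
    refine le_trans ?_ h1
    rcases eq_or_lt_of_le (norm_nonneg ((Q.symm : H →L[ℂ] H))) with h0 | h0
    · -- Q.symm has norm 0
      have hx0 : adjoint K x = 0 := by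
        rw [hkey]
        have : ‖(Q.symm : H →L[ℂ] H) (adjoint K (Q x))‖ ≤ ‖(Q.symm : H →L[ℂ] H)‖ * ‖adjoint K (Q x)‖ := le_opNorm _ _
        rw [← h0, zero_mul] at this
        exact norm_le_zero_iff.mp this
      rw [hx0]
      simp
      positivity
    · rw [div_mul_eq_mul_div, div_le_iff₀ (by positivity)]
      calc A * ‖adjoint K x‖ ^ 2 ≤ A * (‖(Q.symm : H →L[ℂ] H)‖ * ‖adjoint K (Q x)‖) ^ 2 := by
            apply mul_le_mul_of_nonneg_left _ hA.le
            exact pow_le_pow_left₀ (norm_nonneg _) hnorm 2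
        _ = A * ‖adjoint K (Q x)‖ ^ 2 * ‖(Q.symm : H →L[ℂ] H)‖ ^ 2 := by ring
  · -- upper bound
    simp only [hcomp]
    refine le_trans (hupp (Q x)) ?_
    have : ‖Q x‖ ≤ ‖(Q : H →L[ℂ] H)‖ * ‖x‖ := le_opNorm (Q : H →L[ℂ] H) x
    calc B * ‖Q x‖ ^ 2 ≤ B * (‖(Q : H →L[ℂ] H)‖ * ‖x‖) ^ 2 := by
          apply mul_le_mul_of_nonneg_left _ hB.le
          exact pow_le_pow_left₀ (norm_nonneg _) this 2
      _ = B * ‖(Q : H →L[ℂ] H)‖ ^ 2 * ‖x‖ ^ 2 := by ring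
end

section
/- Let {Λ_ω}_{ω∈Ω} be an integral K-operator frame for B(H) with best bounds A, B, let Q : H → H be a bounded invertible operator with Q^{-1} commuting with K*, and let C, D be the best frame bounds of the integral K-operator frame {Λ_ω Q}_{ω∈Ω}. Then A‖Q^{-1}‖^{-2} ≤ C ≤ A‖Q‖² and B‖Q^{-1}‖^{-2} ≤ D ≤ B‖Q‖². -/
open MeasureTheory ContinuousLinearMap

/-!
Precomposing with `Q` transports frame inequalities at the cost of operator norms: if
`Q⁻¹` commutes with `K*`, then `K* x = Q⁻¹ K* (Q x)`, so a lower bound `A` for `{Λ_ω}` gives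
the lower bound `A ‖Q⁻¹‖⁻²` for `{Λ_ω Q}`, while an upper bound `B` gives `B ‖Q‖²`. Since
`{Λ_ω} = {(Λ_ω Q) Q⁻¹}`, the same transport with `Q⁻¹` in place of `Q` bounds the best bounds
of `{Λ_ω}` by those of `{Λ_ω Q}`, which gives the remaining two inequalities.
-/

section FrameBoundTransport

variable {𝕜 E : Type*} [NontriviallyNormedField 𝕜] [NormedAddCommGroup E] [NormedSpace 𝕜 E]

theorem lowerBound_comp_continuousLinearEquiv {F : E → ℝ} {S : E → E} {A : ℝ} (Q : E ≃L[𝕜] E)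
    (hQS : Function.Commute Q.symm S) (hA : 0 ≤ A) (h : ∀ x, A * ‖S x‖ ^ 2 ≤ F x) (x : E) :
    A / ‖(Q.symm : E →L[𝕜] E)‖ ^ 2 * ‖S x‖ ^ 2 ≤ F (Q x) := by
  have hSx : S x = Q.symm (S (Q x)) := by rw [hQS, Q.symm_apply_apply]
  have hnorm : ‖S x‖ ^ 2 ≤ ‖(Q.symm : E →L[𝕜] E)‖ ^ 2 * ‖S (Q x)‖ ^ 2 := by
    rw [← mul_pow, hSx]
    gcongr
    exact (Q.symm : E →L[𝕜] E).le_opNorm _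
  calc A / ‖(Q.symm : E →L[𝕜] E)‖ ^ 2 * ‖S x‖ ^ 2
      ≤ A / ‖(Q.symm : E →L[𝕜] E)‖ ^ 2 * ‖(Q.symm : E →L[𝕜] E)‖ ^ 2 * ‖S (Q x)‖ ^ 2 := by
        rw [mul_assoc]; gcongr
    _ ≤ A * ‖S (Q x)‖ ^ 2 := by
        gcongr
        rw [div_mul_eq_mul_div, mul_div_assoc]
        exact mul_le_of_le_one_right hA (div_self_le_one _)
    _ ≤ F (Q x) := h (Q x)

theorem upperBound_comp_continuousLinearMap {F : E → ℝ} {B : ℝ} (Q : E →L[𝕜] E) (hB : 0 ≤ B)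
    (h : ∀ x, F x ≤ B * ‖x‖ ^ 2) (x : E) : F (Q x) ≤ B * ‖Q‖ ^ 2 * ‖x‖ ^ 2 :=
  calc F (Q x) ≤ B * ‖Q x‖ ^ 2 := h (Q x)
    _ ≤ B * (‖Q‖ * ‖x‖) ^ 2 := by gcongr; exact Q.le_opNorm x
    _ = B * ‖Q‖ ^ 2 * ‖x‖ ^ 2 := by ring

end FrameBoundTransport

theorem stmt_8 {H : Type*} [NormedAddCommGroup H] [InnerProductSpace ℂ H] [CompleteSpace H]
    {Ω : Type*} [MeasurableSpace Ω] (μ : Measure Ω)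
    (Λ : Ω → H →L[ℂ] H) (K : H →L[ℂ] H) (A B C D : ℝ)
    (hA : 0 < A) (hB : 0 < B) (hC : 0 < C) (hD : 0 < D)
    (Q : H ≃L[ℂ] H)
    (hcomm : (Q.symm : H →L[ℂ] H) ∘L adjoint K = adjoint K ∘L (Q.symm : H →L[ℂ] H))
    -- A, B are the best bounds of the integral K-operator frame {Λ_ω}
    (hlow : ∀ x : H, A * ‖adjoint K x‖ ^ 2 ≤ ∫ ω, ‖Λ ω x‖ ^ 2 ∂μ)
    (hupp : ∀ x : H, ∫ ω, ‖Λ ω x‖ ^ 2 ∂μ ≤ B * ‖x‖ ^ 2)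
    (hAbest : ∀ A' : ℝ, (∀ x : H, A' * ‖adjoint K x‖ ^ 2 ≤ ∫ ω, ‖Λ ω x‖ ^ 2 ∂μ) → A' ≤ A)
    (hBbest : ∀ B' : ℝ, (∀ x : H, ∫ ω, ‖Λ ω x‖ ^ 2 ∂μ ≤ B' * ‖x‖ ^ 2) → B ≤ B')
    -- C, D are the best bounds of the integral K-operator frame {Λ_ω Q}
    (hlowQ : ∀ x : H, C * ‖adjoint K x‖ ^ 2 ≤ ∫ ω, ‖(Λ ω ∘L (Q : H →L[ℂ] H)) x‖ ^ 2 ∂μ)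
    (huppQ : ∀ x : H, ∫ ω, ‖(Λ ω ∘L (Q : H →L[ℂ] H)) x‖ ^ 2 ∂μ ≤ D * ‖x‖ ^ 2)
    (hCbest : ∀ C' : ℝ,
      (∀ x : H, C' * ‖adjoint K x‖ ^ 2 ≤ ∫ ω, ‖(Λ ω ∘L (Q : H →L[ℂ] H)) x‖ ^ 2 ∂μ) → C' ≤ C)
    (hDbest : ∀ D' : ℝ,
      (∀ x : H, ∫ ω, ‖(Λ ω ∘L (Q : H →L[ℂ] H)) x‖ ^ 2 ∂μ ≤ D' * ‖x‖ ^ 2) → D ≤ D') :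
    (A / ‖(Q.symm : H →L[ℂ] H)‖ ^ 2 ≤ C ∧ C ≤ A * ‖(Q : H →L[ℂ] H)‖ ^ 2) ∧
      (B / ‖(Q.symm : H →L[ℂ] H)‖ ^ 2 ≤ D ∧ D ≤ B * ‖(Q : H →L[ℂ] H)‖ ^ 2) := by
  -- On the zero space every `C'` would be a lower bound, so `C` could not be the best one.
  have : Nontrivial H := by
    by_contra hH
    have : Subsingleton H := not_nontrivial_iff_subsingleton.mp hH
    linarith [hCbest (C + 1) fun x => by simp [Subsingleton.elim x 0]]
  have hQiS : Function.Commute Q.symm (adjoint K) := DFunLike.congr_fun hcomm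
  have hQS : Function.Commute Q (adjoint K) := hQiS.inverse_left Q.right_inv Q.left_inv
  have hCA : C / ‖(Q : H →L[ℂ] H)‖ ^ 2 ≤ A := hAbest _ fun x => by
    simpa using lowerBound_comp_continuousLinearEquiv Q.symm (by simpa using hQS) hC.le hlowQ x
  have hBD : B ≤ D * ‖(Q.symm : H →L[ℂ] H)‖ ^ 2 := hBbest _ fun x => by
    simpa using upperBound_comp_continuousLinearMap (Q.symm : H →L[ℂ] H) hD.le huppQ x
  refine ⟨⟨hCbest _ (lowerBound_comp_continuousLinearEquiv Q hQiS hA.le hlow), ?_⟩,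
    ⟨?_, hDbest _ (upperBound_comp_continuousLinearMap (Q : H →L[ℂ] H) hB.le hupp)⟩⟩
  · rwa [div_le_iff₀ (pow_pos Q.norm_pos 2)] at hCA
  · rwa [div_le_iff₀ (pow_pos Q.norm_symm_pos 2)]
end
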